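/- Let A be a basic PID and B a Dedekind domain that is a finitely generated free A-module (a ring of class (G) over A). Then there exists a constant C in N such that for every nonzero ideal I of B there exists a nonzero element α in I with |B/αB| ≤ C · |B/I|. -/

import Mathlib

open Ideal

section AuxPID

variable {A : Type*} [CommRing A] [IsDomain A]

lemma my_card_eq_mul {R M : Type*} [Ring R] [AddCommGroup M] [Module R M] (N : Submodule R M) :
    Nat.card M = Nat.card (M ⧸ N) * Nat.card N :=
  AddSubgroup.card_eq_card_quotient_mul_card_addSubgroup N.toAddSubgroup

lemma card_quot_span_mul (x y : A) (hx : x ≠ 0) :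
    Nat.card (A ⧸ Ideal.span {x * y}) =
      Nat.card (A ⧸ Ideal.span {x}) * Nat.card (A ⧸ Ideal.span {y}) := by
  classical
  set S : Ideal A := Ideal.span {x * y} with hS
  set T : Ideal A := Ideal.span {x} with hT
  have hST : S ≤ T := Ideal.span_singleton_le_span_singleton.mpr ⟨y, rfl⟩
  let f : A →ₗ[A] A ⧸ S := S.mkQ.comp (LinearMap.toSpanSingleton A A x)
  have hrange : LinearMap.range f = Submodule.map S.mkQ T := by
    rw [LinearMap.range_comp, ← LinearMap.span_singleton_eq_range]
  have hker : LinearMap.ker f = Ideal.span {y} := by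
    ext a
    simp only [f, LinearMap.mem_ker, LinearMap.comp_apply, LinearMap.toSpanSingleton_apply,
      Submodule.mkQ_apply, Submodule.Quotient.mk_eq_zero, hS]
    rw [show a • x = x * a by rw [smul_eq_mul, mul_comm], Ideal.mem_span_singleton,
      Ideal.mem_span_singleton]
    exact mul_dvd_mul_iff_left hx
  have e1 : (A ⧸ Ideal.span ({y} : Set A)) ≃ₗ[A] Submodule.map S.mkQ T :=
    ((Submodule.quotEquivOfEq _ _ hker.symm).trans f.quotKerEquivRange).trans
      (LinearEquiv.ofEq _ _ hrange)
  have e2 : ((A ⧸ S) ⧸ Submodule.map S.mkQ T) ≃ₗ[A] A ⧸ T :=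
    Submodule.quotientQuotientEquivQuotient S T hST
  calc Nat.card (A ⧸ S)
      = Nat.card ((A ⧸ S) ⧸ Submodule.map S.mkQ T) * Nat.card (Submodule.map S.mkQ T) :=
        my_card_eq_mul _
    _ = Nat.card (A ⧸ T) * Nat.card (A ⧸ Ideal.span ({y} : Set A)) := by
        rw [Nat.card_congr e2.toEquiv, Nat.card_congr e1.toEquiv.symm]

omit [IsDomain A] in
lemma card_quot_span_one : Nat.card (A ⧸ Ideal.span ({1} : Set A)) = 1 := by
  have h : Ideal.span ({1} : Set A) = ⊤ := Ideal.span_singleton_one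
  haveI : Subsingleton (A ⧸ Ideal.span ({1} : Set A)) := by
    rw [Submodule.Quotient.subsingleton_iff]; exact h
  exact Nat.card_of_subsingleton (Submodule.Quotient.mk 0)

omit [IsDomain A] in
lemma card_quot_span_zero (hA : Nat.card A = 0) :
    Nat.card (A ⧸ Ideal.span ({0} : Set A)) = 0 := by
  have h : Ideal.span ({0} : Set A) = ⊥ := by simp
  rw [Nat.card_congr (Submodule.quotEquivOfEqBot _ h).toEquiv, hA]

omit [IsDomain A] in
lemma card_quot_span_neg (x : A) :
    Nat.card (A ⧸ Ideal.span ({-x} : Set A)) = Nat.card (A ⧸ Ideal.span ({x} : Set A)) := by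
  rw [Ideal.span_singleton_neg]

lemma card_quot_span_prod {ι : Type*} (s : Finset ι) (f : ι → A) (hf : ∀ i ∈ s, f i ≠ 0) :
    Nat.card (A ⧸ Ideal.span {∏ i ∈ s, f i}) =
      ∏ i ∈ s, Nat.card (A ⧸ Ideal.span {f i}) := by
  classical
  induction s using Finset.cons_induction with
  | empty => simpa using card_quot_span_one
  | cons a s ha ih =>
    rw [Finset.prod_cons, Finset.prod_cons,
      card_quot_span_mul _ _ (hf a (Finset.mem_cons_self a s)),
      ih (fun i hi => hf i (Finset.mem_cons_of_mem hi))]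

lemma card_quot_span_mul_le (hA : Nat.card A = 0) (x y : A) :
    Nat.card (A ⧸ Ideal.span {x * y}) ≤
      Nat.card (A ⧸ Ideal.span {x}) * Nat.card (A ⧸ Ideal.span {y}) := by
  rcases eq_or_ne x 0 with rfl | hx
  · rw [zero_mul, card_quot_span_zero hA]
    exact Nat.zero_le _
  · exact le_of_eq (card_quot_span_mul x y hx)

lemma card_quot_span_prod_le {ι : Type*} (hA : Nat.card A = 0) (s : Finset ι) (f : ι → A) :
    Nat.card (A ⧸ Ideal.span {∏ i ∈ s, f i}) ≤
      ∏ i ∈ s, Nat.card (A ⧸ Ideal.span {f i}) := by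
  classical
  induction s using Finset.cons_induction with
  | empty => simpa using le_of_eq card_quot_span_one
  | cons a s ha ih =>
    rw [Finset.prod_cons, Finset.prod_cons]
    exact (card_quot_span_mul_le hA _ _).trans (Nat.mul_le_mul_left _ ih)

lemma card_quot_span_sum {C : ℕ} (hC : 0 < C)
    (hqt : ∀ x y : A, Nat.card (A ⧸ Ideal.span {x + y}) ≤
      C * (Nat.card (A ⧸ Ideal.span {x}) + Nat.card (A ⧸ Ideal.span {y})))
    (hA : Nat.card A = 0) {ι : Type*} (s : Finset ι) (f : ι → A) :
    Nat.card (A ⧸ Ideal.span {∑ i ∈ s, f i}) ≤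
      C ^ s.card * ∑ i ∈ s, Nat.card (A ⧸ Ideal.span {f i}) := by
  classical
  induction s using Finset.cons_induction with
  | empty => simpa using le_of_eq (card_quot_span_zero hA)
  | cons a s ha ih =>
    rw [Finset.sum_cons, Finset.sum_cons, Finset.card_cons]
    have h1 := hqt (f a) (∑ i ∈ s, f i)
    have h2 : C * (Nat.card (A ⧸ Ideal.span {f a}) + Nat.card (A ⧸ Ideal.span {∑ i ∈ s, f i}))
        ≤ C * (Nat.card (A ⧸ Ideal.span {f a}) +
            C ^ s.card * ∑ i ∈ s, Nat.card (A ⧸ Ideal.span {f i})) :=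
      Nat.mul_le_mul_left _ (Nat.add_le_add_left ih _)
    refine h1.trans (h2.trans ?_)
    have hCle : C ≤ C ^ (s.card + 1) := Nat.le_self_pow (Nat.succ_ne_zero _) C
    have hpow : C ^ (s.card + 1) = C * C ^ s.card := by ring
    nlinarith [Nat.zero_le (∑ i ∈ s, Nat.card (A ⧸ Ideal.span {f i})),
      Nat.zero_le (Nat.card (A ⧸ Ideal.span {f a}))]

set_option maxHeartbeats 1000000 in
lemma det_bound {C : ℕ} (hC : 0 < C)
    (hqt : ∀ x y : A, Nat.card (A ⧸ Ideal.span {x + y}) ≤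
      C * (Nat.card (A ⧸ Ideal.span {x}) + Nat.card (A ⧸ Ideal.span {y})))
    (hA : Nat.card A = 0)
    {ι : Type*} [Fintype ι] [DecidableEq ι] (M : ι → Matrix ι ι A) (z : ι → A) (K : ℕ)
    (hzK : ∀ i, Nat.card (A ⧸ Ideal.span {z i}) ≤ K) :
    Nat.card (A ⧸ Ideal.span {(∑ k, z k • M k).det}) ≤
      (C ^ Fintype.card (Equiv.Perm ι) * (Fintype.card (Equiv.Perm ι) *
        (C ^ Fintype.card (ι → ι) * (Fintype.card (ι → ι) *
          Finset.sup Finset.univ (fun p : Equiv.Perm ι × (ι → ι) =>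
            Nat.card (A ⧸ Ideal.span {∏ i, M (p.2 i) (p.1 i) i})))))) *
      K ^ Fintype.card ι := by
  set Cmax : ℕ := Finset.sup Finset.univ (fun p : Equiv.Perm ι × (ι → ι) =>
    Nat.card (A ⧸ Ideal.span {∏ i, M (p.2 i) (p.1 i) i})) with hCmax
  set n := Fintype.card ι with hn
  set T1 := Fintype.card (Equiv.Perm ι) with hT1
  set T2 := Fintype.card (ι → ι) with hT2
  have term_bound : ∀ (σ : Equiv.Perm ι) (g : ι → ι),
      Nat.card (A ⧸ Ideal.span {∏ i, (z (g i) * M (g i) (σ i) i)}) ≤ Cmax * K ^ n := by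
    intro σ g
    rw [Finset.prod_mul_distrib]
    refine (card_quot_span_mul_le hA _ _).trans ?_
    have h1 : Nat.card (A ⧸ Ideal.span {∏ i, z (g i)}) ≤ K ^ n := by
      refine (card_quot_span_prod_le hA _ _).trans ?_
      have := Finset.prod_le_pow_card Finset.univ
        (fun i => Nat.card (A ⧸ Ideal.span {z (g i)})) K (fun i _ => hzK (g i))
      rwa [Finset.card_univ, ← hn] at this
    have h2 : Nat.card (A ⧸ Ideal.span {∏ i, M (g i) (σ i) i}) ≤ Cmax := by
      have h := Finset.le_sup (α := ℕ) (f := fun p : Equiv.Perm ι × (ι → ι) =>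
        Nat.card (A ⧸ Ideal.span {∏ i, M (p.2 i) (p.1 i) i})) (Finset.mem_univ (σ, g))
      rw [hCmax]
      simpa using h
    exact (Nat.mul_le_mul h1 h2).trans (le_of_eq (Nat.mul_comm _ _))
  have entry : ∀ σ : Equiv.Perm ι, (∏ i, (∑ k, z k • M k) (σ i) i)
      = ∑ g : ι → ι, ∏ i, (z (g i) * M (g i) (σ i) i) := by
    intro σ
    have h1 : ∀ i, (∑ k, z k • M k) (σ i) i = ∑ k, z k * M k (σ i) i := by
      intro i; simp [Matrix.sum_apply, smul_eq_mul]
    rw [Finset.prod_congr rfl (fun i _ => h1 i), Finset.prod_univ_sum]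
    rw [Fintype.piFinset_univ]
  have hdet : (∑ k, z k • M k).det =
      ∑ σ : Equiv.Perm ι, Equiv.Perm.sign σ •
        ∑ g : ι → ι, ∏ i, (z (g i) * M (g i) (σ i) i) := by
    rw [Matrix.det_apply]
    exact Finset.sum_congr rfl (fun σ _ => by rw [entry σ])
  have sign_smul : ∀ (σ : Equiv.Perm ι) (v : A),
      Nat.card (A ⧸ Ideal.span {Equiv.Perm.sign σ • v}) = Nat.card (A ⧸ Ideal.span {v}) := by
    intro σ v
    rcases Int.units_eq_one_or (Equiv.Perm.sign σ) with h | h <;> rw [h]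
    · rw [Units.smul_def, Units.val_one, one_zsmul]
    · rw [Units.smul_def, Units.val_neg, Units.val_one, neg_one_zsmul]
      exact card_quot_span_neg v
  have step2 : ∀ σ : Equiv.Perm ι,
      Nat.card (A ⧸ Ideal.span {∑ g : ι → ι, ∏ i, (z (g i) * M (g i) (σ i) i)}) ≤
        C ^ T2 * (T2 * (Cmax * K ^ n)) := by
    intro σ
    have h0 := card_quot_span_sum hC hqt hA Finset.univ
      (fun g : ι → ι => ∏ i, (z (g i) * M (g i) (σ i) i))
    rw [Finset.card_univ, ← hT2] at h0
    refine h0.trans (Nat.mul_le_mul_left _ ?_)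
    have := Finset.sum_le_card_nsmul Finset.univ
      (fun g : ι → ι => Nat.card (A ⧸ Ideal.span {∏ i, (z (g i) * M (g i) (σ i) i)}))
      (Cmax * K ^ n) (fun g _ => term_bound σ g)
    rw [Finset.card_univ, ← hT2, smul_eq_mul] at this
    exact this
  rw [hdet]
  have h0 := card_quot_span_sum hC hqt hA Finset.univ
    (fun σ : Equiv.Perm ι => Equiv.Perm.sign σ •
      ∑ g : ι → ι, ∏ i, (z (g i) * M (g i) (σ i) i))
  rw [Finset.card_univ, ← hT1] at h0
  refine h0.trans ?_
  have h1 : ∑ σ : Equiv.Perm ι, Nat.card (A ⧸ Ideal.span {Equiv.Perm.sign σ •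
      ∑ g : ι → ι, ∏ i, (z (g i) * M (g i) (σ i) i)}) ≤
        T1 * (C ^ T2 * (T2 * (Cmax * K ^ n))) := by
    have := Finset.sum_le_card_nsmul Finset.univ
      (fun σ : Equiv.Perm ι => Nat.card (A ⧸ Ideal.span {Equiv.Perm.sign σ •
        ∑ g : ι → ι, ∏ i, (z (g i) * M (g i) (σ i) i)}))
      (C ^ T2 * (T2 * (Cmax * K ^ n)))
      (fun σ _ => by simp only [sign_smul]; exact step2 σ)
    rw [Finset.card_univ, ← hT1, smul_eq_mul] at this
    exact this
  calc C ^ T1 * ∑ σ : Equiv.Perm ι, Nat.card (A ⧸ Ideal.span {Equiv.Perm.sign σ •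
        ∑ g : ι → ι, ∏ i, (z (g i) * M (g i) (σ i) i)})
      ≤ C ^ T1 * (T1 * (C ^ T2 * (T2 * (Cmax * K ^ n)))) := Nat.mul_le_mul_left _ h1
    _ = C ^ T1 * (T1 * (C ^ T2 * (T2 * Cmax))) * K ^ n := by ring

end AuxPID

lemma card_quot_span_singleton_eq_norm {A B ι : Type*} [CommRing A] [IsDomain A]
    [IsPrincipalIdealRing A] [CommRing B] [IsDomain B] [Algebra A B] [Fintype ι]
    (b : Module.Basis ι A B) {α : B} (hα : α ≠ 0) :
    Nat.card (B ⧸ Ideal.span {α}) = Nat.card (A ⧸ Ideal.span {Algebra.norm A α}) := by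
  have hI : (Ideal.span {α} : Ideal B) ≠ ⊥ := by
    simpa [Ne, Ideal.span_singleton_eq_bot] using hα
  rw [Nat.card_congr (Ideal.quotientEquivPiSpan (Ideal.span {α}) b hI).toEquiv, Nat.card_pi]
  rw [Ideal.span_singleton_eq_span_singleton.mpr (associated_norm_prod_smith b hα)]
  rw [card_quot_span_prod _ _ (fun i _ => Ideal.smithCoeffs_ne_zero b _ hI i)]

lemma finite_quot_of_ne_bot {A B ι : Type*} [CommRing A] [IsDomain A]
    [IsPrincipalIdealRing A] [CommRing B] [IsDomain B] [Algebra A B] [Fintype ι]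
    (b : Module.Basis ι A B)
    (hfq : ∀ J : Ideal A, J ≠ ⊥ → Finite (A ⧸ J)) (I : Ideal B) (hI : I ≠ ⊥) :
    Finite (B ⧸ I) := by
  haveI : ∀ i, Finite (A ⧸ Ideal.span {I.smithCoeffs b hI i}) := fun i =>
    hfq _ (by simpa [Ne, Ideal.span_singleton_eq_bot] using Ideal.smithCoeffs_ne_zero b I hI i)
  exact Finite.of_equiv _ (Ideal.quotientEquivPiSpan I b hI).toEquiv.symm

/-- Let `A` be a basic PID and `B` a Dedekind domain that is a finitely generated free
`A`-module (a ring of class (G) over `A`). Then there is a constant `C ∈ ℕ` such that for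
every nonzero ideal `I` of `B` there is a nonzero `α ∈ I` with `|B/αB| ≤ C · |B/I|`. -/
theorem exists_elem_small_norm
    (A : Type*) [CommRing A] [IsDomain A] [IsPrincipalIdealRing A]
    (hnf : ¬ IsField A)
    (hfq : ∀ I : Ideal A, I ≠ ⊥ → Finite (A ⧸ I))
    (hsmall : ∃ c : ℕ, 0 < c ∧ ∀ m : ℕ, 0 < m →
      m ≤ {x : A | Nat.card (A ⧸ Ideal.span {x}) ≤ c * m}.ncard)
    (hqt : ∃ C : ℕ, 0 < C ∧ ∀ x y : A,
      Nat.card (A ⧸ Ideal.span {x + y}) ≤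
        C * (Nat.card (A ⧸ Ideal.span {x}) + Nat.card (A ⧸ Ideal.span {y})))
    (B : Type*) [CommRing B] [IsDedekindDomain B] [Algebra A B]
    [Module.Finite A B] [Module.Free A B] :
    ∃ C : ℕ, 0 < C ∧ ∀ I : Ideal B, I ≠ ⊥ →
      ∃ α ∈ I, α ≠ 0 ∧
        Nat.card (B ⧸ Ideal.span {α}) ≤ C * Nat.card (B ⧸ I) := by
  classical
  obtain ⟨c, hc, hsmall⟩ := hsmall
  obtain ⟨C, hCpos, hqt⟩ := hqt
  haveI hAinf : Infinite A := by
    rw [← not_finite_iff_infinite]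
    intro h
    exact hnf (Finite.isField_of_domain A)
  have hA0 : Nat.card A = 0 := Nat.card_eq_zero_of_infinite
  let ι := Module.Free.ChooseBasisIndex A B
  let b : Module.Basis ι A B := Module.Free.chooseBasis A B
  haveI : Nonempty ι := b.index_nonempty
  have hn : 0 < Fintype.card ι := Fintype.card_pos
  obtain ⟨E, hdb⟩ : ∃ E : ℕ, ∀ (z : ι → A) (K : ℕ),
      (∀ i, Nat.card (A ⧸ Ideal.span {z i}) ≤ K) →
      Nat.card (A ⧸ Ideal.span {(∑ k, z k • Algebra.leftMulMatrix b (b k)).det}) ≤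
        E * K ^ Fintype.card ι :=
    ⟨_, fun z K hzK =>
      det_bound hCpos hqt hA0 (fun k => Algebra.leftMulMatrix b (b k)) z K hzK⟩
  refine ⟨E * (4 * C * c) ^ Fintype.card ι + 1, Nat.succ_pos _, ?_⟩
  intro I hI
  haveI : Finite (B ⧸ I) := finite_quot_of_ne_bot b hfq I hI
  haveI : Fintype (B ⧸ I) := Fintype.ofFinite _
  have hq1 : 0 < Nat.card (B ⧸ I) := Nat.card_pos
  set q := Nat.card (B ⧸ I) with hq
  -- choose m minimal with q < m ^ n
  have hex : ∃ m : ℕ, q < m ^ Fintype.card ι :=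
    ⟨q + 1, lt_of_lt_of_le (Nat.lt_succ_self q) (Nat.le_self_pow hn.ne' _)⟩
  set m := Nat.find hex with hm_def
  have hm : q < m ^ Fintype.card ι := Nat.find_spec hex
  have hmne : m ≠ 0 := by
    intro h
    rw [h, zero_pow hn.ne'] at hm
    omega
  have hmne1 : m ≠ 1 := by
    intro h
    rw [h, one_pow] at hm
    omega
  have hm2 : 2 ≤ m := by omega
  have hmin : (m - 1) ^ Fintype.card ι ≤ q :=
    not_lt.mp (Nat.find_min hex (show m - 1 < m by omega))
  have hm2n : m ^ Fintype.card ι ≤ 2 ^ Fintype.card ι * q := by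
    calc m ^ Fintype.card ι ≤ (2 * (m - 1)) ^ Fintype.card ι :=
          Nat.pow_le_pow_left (by omega) _
      _ = 2 ^ Fintype.card ι * (m - 1) ^ Fintype.card ι := by rw [mul_pow]
      _ ≤ 2 ^ Fintype.card ι * q := Nat.mul_le_mul_left _ hmin
  -- the set of m elements with small quotients
  obtain ⟨t, hts, htcard⟩ := Set.exists_subset_card_eq (hsmall m (by omega))
  have htfin : t.Finite := by
    by_contra h
    rw [Set.Infinite.ncard h] at htcard
    omega
  set u : Finset A := htfin.toFinset with hu
  have hucard : u.card = m := by
    rw [hu, ← Set.ncard_eq_toFinset_card t htfin, htcard]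
  have humem : ∀ x ∈ u, Nat.card (A ⧸ Ideal.span {x}) ≤ c * m := fun x hx =>
    hts (htfin.mem_toFinset.mp hx)
  -- pigeonhole
  have cardlt : Fintype.card (B ⧸ I) < Fintype.card (ι → ↥u) := by
    rw [Fintype.card_fun, Fintype.card_coe, hucard, ← Nat.card_eq_fintype_card (α := B ⧸ I)]
    exact hm
  obtain ⟨x, y, hxy, hfeq⟩ := Fintype.exists_ne_map_eq_of_card_lt
    (fun v : ι → ↥u => Ideal.Quotient.mk I (∑ i, (v i : A) • b i)) cardlt
  set z : ι → A := fun i => (x i : A) - (y i : A) with hz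
  set α : B := ∑ i, z i • b i with hα
  have hαI : α ∈ I := by
    have h := Ideal.Quotient.eq.mp hfeq
    simpa [hα, hz, sub_smul, Finset.sum_sub_distrib] using h
  have hα0 : α ≠ 0 := by
    intro h0
    apply hxy
    have hz0 := Fintype.linearIndependent_iff.mp b.linearIndependent z (hα.symm.trans h0)
    simp only [hz] at hz0
    funext i
    exact Subtype.ext (sub_eq_zero.mp (hz0 i))
  have hzK : ∀ i, Nat.card (A ⧸ Ideal.span {z i}) ≤ 2 * C * c * m := by
    intro i
    have h1 : Nat.card (A ⧸ Ideal.span {(x i : A)}) ≤ c * m := humem _ (x i).2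
    have h2 : Nat.card (A ⧸ Ideal.span {(y i : A)}) ≤ c * m := humem _ (y i).2
    have h3 := hqt ((x i : A)) (-(y i : A))
    rw [← sub_eq_add_neg, card_quot_span_neg] at h3
    have h4 : Nat.card (A ⧸ Ideal.span {(x i : A) - (y i : A)}) ≤ C * (c * m + c * m) :=
      h3.trans (Nat.mul_le_mul_left _ (Nat.add_le_add h1 h2))
    have h5 : C * (c * m + c * m) = 2 * C * c * m := by ring
    simp only [hz]
    omega
  refine ⟨α, hαI, hα0, ?_⟩
  rw [card_quot_span_singleton_eq_norm b hα0]
  have hnorm : Algebra.norm A α = (∑ k, z k • Algebra.leftMulMatrix b (b k)).det := by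
    rw [Algebra.norm_eq_matrix_det b]
    congr 1
    rw [hα, map_sum]
    exact Finset.sum_congr rfl (fun k _ => map_smul _ _ _)
  rw [hnorm]
  refine (hdb z (2 * C * c * m) hzK).trans ?_
  calc E * (2 * C * c * m) ^ Fintype.card ι
      = E * ((2 * C * c) ^ Fintype.card ι * m ^ Fintype.card ι) := by rw [mul_pow]
    _ ≤ E * ((2 * C * c) ^ Fintype.card ι * (2 ^ Fintype.card ι * q)) :=
        Nat.mul_le_mul_left _ (Nat.mul_le_mul_left _ hm2n)
    _ = (E * (4 * C * c) ^ Fintype.card ι) * q := by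
        rw [show (4 * C * c) ^ Fintype.card ι =
          (2 * C * c) ^ Fintype.card ι * 2 ^ Fintype.card ι by
            rw [← mul_pow]; ring_nf]
        ring
    _ ≤ (E * (4 * C * c) ^ Fintype.card ι + 1) * q :=
        Nat.mul_le_mul_right _ (Nat.le_succ _)
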